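/- arXiv:2403.04289 — 3 statements merged into one kernel-verified Lean document; each statement's English description precedes it below -/
import Mathlib

section
/- For integers 0 ≤ k < l ≤ ⌊n/2⌋ and integer q ≥ 2, the Gaussian binomial coefficients satisfy the strict unimodality inequality [n choose k]_q < [n choose l]_q. -/
/-! Passing from `[n choose m]_q` to `[n choose m+1]_q` multiplies by `(q^(n-m) - 1) / (q^(m+1) - 1)`,
which exceeds `1` exactly when `m + 1 < n - m`, i.e. while `m + 1 ≤ n / 2`. -/

noncomputable def gaussBinom (q n k : ℕ) : ℚ :=
  ∏ i ∈ Finset.range k, ((q : ℚ) ^ (n - i) - 1) / ((q : ℚ) ^ (k - i) - 1)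

theorem gaussBinom_eq_prod_div_prod (q n k : ℕ) :
    gaussBinom q n k = (∏ i ∈ Finset.range k, ((q : ℚ) ^ (n - i) - 1)) /
      ∏ i ∈ Finset.range k, ((q : ℚ) ^ (i + 1) - 1) := by
  rw [gaussBinom, Finset.prod_div_distrib,
    ← Finset.prod_range_reflect (fun i => (q : ℚ) ^ (i + 1) - 1) k]
  congr 1
  refine Finset.prod_congr rfl fun i hi => ?_
  rw [Finset.mem_range] at hi
  congr 2
  omega

theorem gaussBinom_succ (q n k : ℕ) :
    gaussBinom q n (k + 1) =
      gaussBinom q n k * (((q : ℚ) ^ (n - k) - 1) / ((q : ℚ) ^ (k + 1) - 1)) := by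
  rw [gaussBinom_eq_prod_div_prod, gaussBinom_eq_prod_div_prod, Finset.prod_range_succ,
    Finset.prod_range_succ, div_mul_div_comm]

theorem gaussBinom_pos {q n k : ℕ} (hq : 1 < q) (hk : k ≤ n) : 0 < gaussBinom q n k := by
  have hq' : (1 : ℚ) < q := by exact_mod_cast hq
  rw [gaussBinom_eq_prod_div_prod]
  refine div_pos (Finset.prod_pos fun i hi => ?_) (Finset.prod_pos fun i _ => ?_)
  · rw [Finset.mem_range] at hi
    exact sub_pos.2 (one_lt_pow₀ hq' (by omega))
  · exact sub_pos.2 (one_lt_pow₀ hq' (Nat.succ_ne_zero i))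

theorem gaussBinom_lt_succ {q n k : ℕ} (hq : 1 < q) (hk : k + 1 ≤ n / 2) :
    gaussBinom q n k < gaussBinom q n (k + 1) := by
  have hq' : (1 : ℚ) < q := by exact_mod_cast hq
  have hden : 0 < (q : ℚ) ^ (k + 1) - 1 := sub_pos.2 (one_lt_pow₀ hq' (Nat.succ_ne_zero k))
  have hpow : (q : ℚ) ^ (k + 1) < (q : ℚ) ^ (n - k) := pow_lt_pow_right₀ hq' (by omega)
  have hratio : 1 < ((q : ℚ) ^ (n - k) - 1) / ((q : ℚ) ^ (k + 1) - 1) := by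
    rw [one_lt_div hden]
    linarith
  rw [gaussBinom_succ]
  exact lt_mul_of_one_lt_right (gaussBinom_pos hq (by omega)) hratio

theorem gaussBinom_strictMonoOn {q : ℕ} (hq : 1 < q) (n : ℕ) :
    StrictMonoOn (gaussBinom q n) (Set.Iic (n / 2)) :=
  strictMonoOn_Iic_of_lt_succ fun _ hk => gaussBinom_lt_succ hq hk

theorem gaussBinom_strict_unimodal (q n k l : ℕ) (hq : 2 ≤ q)
    (hkl : k < l) (hl : l ≤ n / 2) :
    gaussBinom q n k < gaussBinom q n l :=
  gaussBinom_strictMonoOn hq n (Set.mem_Iic.2 (hkl.le.trans hl)) (Set.mem_Iic.2 hl) hkl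
end

section
/- Suppose 1 ≤ k ≤ ⌊n/2⌋ and f₁, ..., f_{⌊n/2⌋} are nonnegative real numbers satisfying ∑_{j=1}^{⌊n/2⌋} f_j / [n-1 choose j-1]_q ≤ k and f_i ≤ [n-1 choose i-1]_q for each 1 ≤ i ≤ ⌊n/2⌋. Then ∑_{j=1}^{⌊n/2⌋} f_j ≤ ∑_{j=⌊n/2⌋-k+1}^{⌊n/2⌋} [n-1 choose j-1]_q. -/
open Finset

section Bathtub

variable {ι : Type*} {s t : Finset ι} {f w : ι → ℝ} {c : ℝ}

lemma le_mul_div_of_le_threshold {a b : ℝ} (ha : 0 ≤ a) (hb : 0 < b) (hbc : b ≤ c) :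
    a ≤ c * (a / b) := by
  calc a = b * (a / b) := (mul_div_cancel₀ a hb.ne').symm
    _ ≤ c * (a / b) := mul_le_mul_of_nonneg_right hbc (div_nonneg ha hb.le)

lemma mul_one_sub_div_le_of_threshold_le {a b : ℝ} (hc : 0 < c) (hcb : c ≤ b) (hab : a ≤ b) :
    c * (1 - a / b) ≤ b - a := by
  have hb : 0 < b := hc.trans_le hcb
  calc c * (1 - a / b) ≤ b * (1 - a / b) :=
        mul_le_mul_of_nonneg_right hcb (sub_nonneg.2 ((div_le_one hb).2 hab))
    _ = b - a := by field_simp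

theorem sum_add_sum_le_sum_of_sum_div_le_card (hc : 0 < c)
    (hs : ∀ i ∈ s, 0 ≤ f i ∧ 0 < w i ∧ w i ≤ c) (ht : ∀ i ∈ t, f i ≤ w i ∧ c ≤ w i)
    (h : ∑ i ∈ s, f i / w i + ∑ i ∈ t, f i / w i ≤ #t) :
    ∑ i ∈ s, f i + ∑ i ∈ t, f i ≤ ∑ i ∈ t, w i := by
  have hlow : ∑ i ∈ s, f i ≤ c * ∑ i ∈ s, f i / w i := by
    rw [mul_sum]
    exact sum_le_sum fun i hi ↦ le_mul_div_of_le_threshold (hs i hi).1 (hs i hi).2.1 (hs i hi).2.2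
  have hhigh : c * ∑ i ∈ t, (1 - f i / w i) ≤ ∑ i ∈ t, (w i - f i) := by
    rw [mul_sum]
    exact sum_le_sum fun i hi ↦ mul_one_sub_div_le_of_threshold_le hc (ht i hi).2 (ht i hi).1
  have hbalance : ∑ i ∈ s, f i / w i ≤ ∑ i ∈ t, (1 - f i / w i) := by
    rw [sum_sub_distrib, sum_const, nsmul_one]
    linarith
  calc ∑ i ∈ s, f i + ∑ i ∈ t, f i ≤ c * ∑ i ∈ t, (1 - f i / w i) + ∑ i ∈ t, f i := by
        linarith [mul_le_mul_of_nonneg_left hbalance hc.le]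
    _ ≤ ∑ i ∈ t, (w i - f i) + ∑ i ∈ t, f i := by linarith
    _ = ∑ i ∈ t, w i := by rw [sum_sub_distrib, sub_add_cancel]

end Bathtub

lemma sum_Icc_one_eq_add {M : Type*} [AddCommMonoid M] (g : ℕ → M) {a m : ℕ} (ha : a ≤ m) :
    ∑ j ∈ Icc 1 m, g j = ∑ j ∈ Icc 1 a, g j + ∑ j ∈ Icc (a + 1) m, g j := by
  have := sum_Ioc_consecutive g a.zero_le ha
  simp only [← Icc_add_one_left_eq_Ioc, zero_add] at this
  exact this.symm

section GaussBinom

variable {q N : ℕ}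

lemma gaussBinom_pos_s7 (hq : 1 < q) {r : ℕ} (h : r ≤ N) : 0 < gaussBinom q N r := by
  refine prod_pos fun i hi ↦ ?_
  have hi : i < r := mem_range.1 hi
  have h₁ := one_lt_pow₀ (a := (q : ℚ)) (by exact_mod_cast hq) (n := N - i) (by omega)
  have h₂ := one_lt_pow₀ (a := (q : ℚ)) (by exact_mod_cast hq) (n := r - i) (by omega)
  exact div_pos (by linarith) (by linarith)

lemma gaussBinom_eq_div (q N r : ℕ) : gaussBinom q N r =
    (∏ i ∈ range r, ((q : ℚ) ^ (N - i) - 1)) / ∏ i ∈ range r, ((q : ℚ) ^ (i + 1) - 1) := by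
  rw [gaussBinom, prod_div_distrib, ← prod_range_reflect (fun i ↦ (q : ℚ) ^ (i + 1) - 1) r]
  congr 1
  refine prod_congr rfl fun i hi ↦ ?_
  have : i < r := mem_range.1 hi
  congr 2
  omega

lemma gaussBinom_le_succ (hq : 1 < q) {r : ℕ} (h : 2 * r + 1 ≤ N) :
    gaussBinom q N r ≤ gaussBinom q N (r + 1) := by
  have hpos := gaussBinom_pos_s7 hq (N := N) (r := r) (by omega)
  rw [gaussBinom_eq_div] at hpos ⊢
  rw [gaussBinom_eq_div, prod_range_succ, prod_range_succ, mul_div_mul_comm]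
  -- the new factor `(q ^ (N - r) - 1) / (q ^ (r + 1) - 1)` is at least `1` because `r + 1 ≤ N - r`
  have hden := one_lt_pow₀ (a := (q : ℚ)) (by exact_mod_cast hq) (n := r + 1) (by omega)
  have hnum : (q : ℚ) ^ (r + 1) ≤ (q : ℚ) ^ (N - r) :=
    pow_le_pow_right₀ (by exact_mod_cast hq.le) (by omega)
  refine le_mul_of_one_le_right hpos.le ?_
  rw [one_le_div (by linarith)]
  linarith

lemma gaussBinom_le_gaussBinom (hq : 1 < q) {i j : ℕ} (hij : i ≤ j) (hj : 2 * j ≤ N + 1) :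
    gaussBinom q N i ≤ gaussBinom q N j := by
  induction j, hij using Nat.le_induction with
  | base => exact le_rfl
  | succ j _ ih => exact (ih (by omega)).trans (gaussBinom_le_succ hq (by omega))

end GaussBinom

theorem sum_le_top_levels_general (q n k : ℕ) (hq : 2 ≤ q) (hkn : k ≤ n / 2)
    (f : ℕ → ℝ) (hf : ∀ j ∈ Finset.Icc 1 (n / 2), 0 ≤ f j)
    (hLYM : ∑ j ∈ Finset.Icc 1 (n / 2),
        f j / ((gaussBinom q (n - 1) (j - 1) : ℚ) : ℝ) ≤ (k : ℝ))
    (hbd : ∀ i ∈ Finset.Icc 1 (n / 2),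
        f i ≤ ((gaussBinom q (n - 1) (i - 1) : ℚ) : ℝ)) :
    ∑ j ∈ Finset.Icc 1 (n / 2), f j ≤
      ∑ j ∈ Finset.Icc (n / 2 - k + 1) (n / 2),
        ((gaussBinom q (n - 1) (j - 1) : ℚ) : ℝ) := by
  set m := n / 2
  set B : ℕ → ℝ := fun j ↦ ((gaussBinom q (n - 1) (j - 1) : ℚ) : ℝ)
  have hB_pos : ∀ j ≤ m, 0 < B j := fun j hj ↦ by
    simpa [B] using gaussBinom_pos_s7 (by omega) (N := n - 1) (r := j - 1) (by omega)
  have hB_mono : ∀ i j, i ≤ j → j ≤ m → B i ≤ B j := fun i j hij hj ↦ by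
    simpa [B] using gaussBinom_le_gaussBinom (by omega) (N := n - 1) (i := i - 1) (j := j - 1)
      (by omega) (by omega)
  -- when `k = m` the threshold is `B 0 = B 1`, by truncated subtraction
  have hmain := sum_add_sum_le_sum_of_sum_div_le_card (c := B (m - k))
    (s := Icc 1 (m - k)) (t := Icc (m - k + 1) m) (f := f) (w := B) (hB_pos _ (by omega))
    (fun j hj ↦ by
      have hj := mem_Icc.1 hj
      exact ⟨hf j (mem_Icc.2 ⟨hj.1, by omega⟩), hB_pos j (by omega), hB_mono _ _ hj.2 (by omega)⟩)
    (fun j hj ↦ by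
      have hj := mem_Icc.1 hj
      exact ⟨hbd j (mem_Icc.2 ⟨by omega, hj.2⟩), hB_mono _ _ (by omega) hj.2⟩)
    (by rw [← sum_Icc_one_eq_add _ (Nat.sub_le m k), Nat.card_Icc]; convert hLYM using 2; omega)
  rwa [← sum_Icc_one_eq_add _ (Nat.sub_le m k)] at hmain

theorem sum_le_top_levels (q n k : ℕ) (hq : 2 ≤ q) (hk : 1 ≤ k) (hkn : k ≤ n / 2)
    (f : ℕ → ℝ) (hf : ∀ j ∈ Finset.Icc 1 (n / 2), 0 ≤ f j)
    (hLYM : ∑ j ∈ Finset.Icc 1 (n / 2),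
        f j / ((gaussBinom q (n - 1) (j - 1) : ℚ) : ℝ) ≤ (k : ℝ))
    (hbd : ∀ i ∈ Finset.Icc 1 (n / 2),
        f i ≤ ((gaussBinom q (n - 1) (i - 1) : ℚ) : ℝ)) :
    ∑ j ∈ Finset.Icc 1 (n / 2), f j ≤
      ∑ j ∈ Finset.Icc (n / 2 - k + 1) (n / 2),
        ((gaussBinom q (n - 1) (j - 1) : ℚ) : ℝ) :=
  sum_le_top_levels_general q n k hq hkn f hf hLYM hbd
end

section
/- For 0 ≤ i ≤ n, the double-counting identity [n choose i]_q · t_i = α(q,n) · C(n,i) holds, where α(q,n) = (q^n-1)(q^n-q)···(q^n-q^{n-1})/n! is the number of bases of F_q^n, t_i = (q^i-1)···(q^i-q^{i-1})(q^n-q^i)···(q^n-q^{n-1})/(i!(n-i)!), [n choose i]_q is the Gaussian binomial coefficient, and C(n,i) is the ordinary binomial coefficient. -/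
/-! Factoring `q ^ j` out of `q ^ k - q ^ j` shows that `[n choose i]_q` times the number
`∏_{j<i} (q^i - q^j)` of ordered bases of `F_q^i` is the number `∏_{j<i} (q^n - q^j)` of ordered
`i`-tuples of independent vectors in `F_q^n`. Multiplying by the remaining factors
`∏_{i≤j<n} (q^n - q^j)` gives the number of ordered bases of `F_q^n`, and the factorials
recombine as `n! = C(n,i) · i! · (n-i)!`. -/

lemma pow_sub_pow_eq_pow_mul {R : Type*} [Ring R] (x : R) {j k : ℕ} (hjk : j ≤ k) :
    x ^ k - x ^ j = x ^ j * (x ^ (k - j) - 1) := by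
  rw [mul_sub, mul_one, ← pow_add, Nat.add_sub_cancel' hjk]

lemma gaussBinom_mul_prod_pow_sub_pow {q n i : ℕ} (hq : 1 < q) (hi : i ≤ n) :
    gaussBinom q n i * ∏ j ∈ Finset.range i, ((q : ℚ) ^ i - (q : ℚ) ^ j) =
      ∏ j ∈ Finset.range i, ((q : ℚ) ^ n - (q : ℚ) ^ j) := by
  rw [gaussBinom, ← Finset.prod_mul_distrib]
  refine Finset.prod_congr rfl fun j hj => ?_
  have hji : j < i := Finset.mem_range.mp hj
  have hq_pow : (q : ℚ) ^ (i - j) - 1 ≠ 0 :=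
    sub_ne_zero.mpr (one_lt_pow₀ (by exact_mod_cast hq) (by omega)).ne'
  rw [pow_sub_pow_eq_pow_mul _ hji.le, pow_sub_pow_eq_pow_mul _ (hji.trans_le hi).le]
  field_simp

/-- The double-counting identity `[n choose i]_q · t_i = α(q,n) · C(n,i)`. -/
theorem gaussBinom_mul_t_eq (q n i : ℕ) (hq : 2 ≤ q) (hi : i ≤ n) :
    gaussBinom q n i *
      ((∏ j ∈ Finset.range i, ((q : ℚ) ^ i - (q : ℚ) ^ j)) *
        (∏ j ∈ Finset.Ico i n, ((q : ℚ) ^ n - (q : ℚ) ^ j)) /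
        ((i.factorial : ℚ) * ((n - i).factorial : ℚ))) =
      ((∏ j ∈ Finset.range n, ((q : ℚ) ^ n - (q : ℚ) ^ j)) / (n.factorial : ℚ)) *
        (n.choose i : ℚ) := by
  have hfac : (n.choose i : ℚ) * i.factorial * (n - i).factorial = n.factorial := by
    exact_mod_cast Nat.choose_mul_factorial_mul_factorial hi
  have hchoose : (n.choose i : ℚ) ≠ 0 := by exact_mod_cast (Nat.choose_pos hi).ne'
  rw [← Finset.prod_range_mul_prod_Ico _ hi, mul_div_assoc', ← mul_assoc,
    gaussBinom_mul_prod_pow_sub_pow hq hi, ← hfac]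
  field_simp
end
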